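/- Let V be a set and let r_0, r_1, …, r_{T−1} be binary relations on V, each of which is reflexive (contains every pair (v,v)). Suppose there are elements v_0, v_1, …, v_z of V and times t_0 < t_1 < ⋯ < t_{z−1} with 0 ≤ t_q < T, such that (v_q, v_{q+1}) ∈ r_{t_q} for every q with 0 ≤ q ≤ z−1. Then (v_0, v_z) belongs to the composition r_0 ∘ r_1 ∘ ⋯ ∘ r_{T−1}. -/
import Mathlib


/-- Composition `r_0 ∘ r_1 ∘ ⋯ ∘ r_{T-1}` of the first `T` relations in a sequence,
in left-to-right order (`(E₁ ∘ E₂) b d ↔ ∃ c, E₁ b c ∧ E₂ c d`); the empty composition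
is equality. -/
def relCompUpTo {V : Type*} (r : ℕ → V → V → Prop) : ℕ → (V → V → Prop)
  | 0 => Eq
  | T + 1 => Relation.Comp (relCompUpTo r T) (r T)

lemma relCompUpTo_pad {V : Type*} (r : ℕ → V → V → Prop) (a b : V) :
    ∀ T S, S ≤ T → (∀ s, S ≤ s → s < T → r s b b) →
      relCompUpTo r S a b → relCompUpTo r T a b := by
  intro T
  induction T with
  | zero => intro S hS _ h; interval_cases S; exact h
  | succ T ih =>
    intro S hS hrefl h
    rcases Nat.lt_or_ge S (T+1) with h' | h'
    · exact ⟨b, ih S (by omega) (fun s h1 h2 => hrefl s h1 (by omega)) h,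
        hrefl T (by omega) (by omega)⟩
    · have : S = T + 1 := by omega
      subst this; exact h

lemma stmt4_aux {V : Type*} (r : ℕ → V → V → Prop) (v : ℕ → V) (t : ℕ → ℕ) :
    ∀ z, (∀ q, q + 1 < z → t q < t (q + 1)) →
      (∀ q, q < z → r (t q) (v q) (v (q + 1))) →
      ∀ U, (∀ s, s < U → ∀ w, r s w w) → (∀ q, q < z → t q < U) →
      relCompUpTo r U (v 0) (v z) := by
  intro z
  induction z with
  | zero =>
    intro _ _ U hrefl _
    exact relCompUpTo_pad r (v 0) (v 0) U 0 (Nat.zero_le _)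
      (fun s _ hs => hrefl s hs _) rfl
  | succ z ih =>
    intro hmono hedge U hrefl htU
    have htzU : t z < U := htU z (by omega)
    have hmono' : ∀ p q, p < q → q < z + 1 → t p < t q := by
      intro p q hpq hq
      induction q with
      | zero => omega
      | succ n ihn =>
        rcases Nat.lt_succ_iff_lt_or_eq.mp hpq with h | h
        · exact lt_trans (ihn h (by omega)) (hmono n (by omega))
        · subst h; exact hmono p (by omega)
    have h1 : relCompUpTo r (t z) (v 0) (v z) :=
      ih (fun q hq => hmono q (by omega)) (fun q hq => hedge q (by omega))
        (t z) (fun s hs w => hrefl s (by omega) w)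
        (fun q hq => hmono' q z hq (by omega))
    have h2 : relCompUpTo r (t z + 1) (v 0) (v (z + 1)) :=
      ⟨v z, h1, hedge z (by omega)⟩
    exact relCompUpTo_pad r (v 0) (v (z + 1)) U (t z + 1) (by omega)
      (fun s h1 h2 => hrefl s h2 _) h2

/-- Padding-with-self-loops lemma: if each of the reflexive relations `r_0, …, r_{T-1}` is
reflexive and there are elements `v_0, …, v_z` and times `t_0 < t_1 < ⋯ < t_{z-1} < T` with
`(v_q, v_{q+1}) ∈ r_{t_q}` for all `q < z`, then `(v_0, v_z)` belongs to the composition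
`r_0 ∘ r_1 ∘ ⋯ ∘ r_{T-1}`. -/
theorem stmt4 {V : Type*} (T z : ℕ) (r : ℕ → V → V → Prop)
    (hrefl : ∀ s, s < T → ∀ v, r s v v)
    (v : ℕ → V) (t : ℕ → ℕ)
    (hmono : ∀ q, q + 1 < z → t q < t (q + 1))
    (hT : ∀ q, q < z → t q < T)
    (hedge : ∀ q, q < z → r (t q) (v q) (v (q + 1))) :
    relCompUpTo r T (v 0) (v z) := by
  exact stmt4_aux r v t z hmono hedge T hrefl hT
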